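/- In the on-chain-verified audit game, assume (i) S_a > ((1 − p_a)/p_a)·R_a + c_a/(ε·p_a), (ii) R_a > c_a/(1 − ε), and (iii) R_s > c_s. Let J be a set of SPs with |J| < N/2. Then the honest profile σ^h is (|J|²·c_a)-coalition resistant with respect to J: for every joint deviation σ'_J of the members of J, Σ_{i∈J} u_i(σ'_J, σ^h_{−J}) ≤ Σ_{i∈J} u_i(σ^h) + |J|²·c_a. -/
import Mathlib


/-!
On-chain-verified audit game: `N ≥ 3` storage providers (SPs), parameters
`R_s > 0` (storage reward), `R_a > 0` (per-audit reward), `c_s > 0` (storage cost),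
`c_a > 0` (audit cost), `S_a ≥ 0` (slashing penalty), `p_a ∈ (0,1]` (inspection
probability), `ε ∈ (0,1)` (noise). A pure strategy of SP `i` is a triple `(s, a, ρ)`:
a storage bit, audit bits for each other SP, and reporting policies `ρ j : Bool → Bool`
(report as a function of having received a valid proof).
-/

open Finset

/-- A pure strategy of storage provider `i` in the on-chain-verified audit game. -/
structure Strat (N : ℕ) (i : Fin N) where
  /-- whether `i` stores its assigned data -/
  s : Bool
  /-- whether `i` audits SP `j` (at cost `c_a`) -/
  a : {j : Fin N // j ≠ i} → Bool
  /-- `i`'s reporting policy about `j`, as a function of whether a valid proof was received -/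
  ρ : {j : Fin N // j ≠ i} → Bool → Bool

/-- Numerical value of a Boolean choice. -/
def b01 (b : Bool) : ℝ := if b then 1 else 0

/-- Expected audit payoff of the auditor from one ordered pair `(i,j)`, where `sj` is the
auditee's storage bit, `a` the auditor's audit bit, and `ρ` the auditor's reporting policy.
The backing probability is `β = 1 − ε` if the auditee stores and `0` otherwise; an unbacked
✓ report earns `(1 − p_a)·R_a − p_a·S_a` in expectation. -/
noncomputable def pairPayoff (Ra ca Sa pa ε : ℝ) (sj a : Bool) (ρ : Bool → Bool) : ℝ :=
  let β : ℝ := if sj then 1 - ε else 0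
  let F : ℝ := (1 - pa) * Ra - pa * Sa
  if a then β * b01 (ρ true) * Ra + (1 - β) * b01 (ρ false) * F - ca
  else b01 (ρ false) * (β * Ra + (1 - β) * F)

/-- The deterministic report of `i` about `j`: `r_i^j = ρ_i^j (a_i^j · s_j)`. -/
def report {N : ℕ} (σ : ∀ i : Fin N, Strat N i) (i : Fin N) (j : {j : Fin N // j ≠ i}) : Bool :=
  (σ i).ρ j ((σ i).a j && (σ j.1).s)

/-- Number of SPs `j ≠ i` whose deterministic report about `i` is ✓. -/
def trueReports {N : ℕ} (σ : ∀ i : Fin N, Strat N i) (i : Fin N) : ℕ :=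
  (univ.filter fun j : {j : Fin N // j ≠ i} => report σ j.1 ⟨i, Ne.symm j.2⟩ = true).card

/-- Total (expected) utility of SP `i`:
`u_i(σ) = R_s·1[|{j ≠ i : r_j^i = 1}| > N/2] − c_s·s_i + Σ_{j≠i} pairPayoff(i,j)`. -/
noncomputable def U {N : ℕ} (Rs Ra cs ca Sa pa ε : ℝ) (σ : ∀ i : Fin N, Strat N i)
    (i : Fin N) : ℝ :=
  Rs * (if (N : ℝ) / 2 < (trueReports σ i : ℝ) then 1 else 0)
    - cs * b01 (σ i).s
    + ∑ j : {j : Fin N // j ≠ i}, pairPayoff Ra ca Sa pa ε (σ j.1).s ((σ i).a j) ((σ i).ρ j)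

/-- Pure Nash equilibrium: no SP can strictly increase its own utility by unilaterally
changing its strategy. -/
def IsNashEq {N : ℕ} (Rs Ra cs ca Sa pa ε : ℝ) (σ : ∀ i : Fin N, Strat N i) : Prop :=
  ∀ (i : Fin N) (τ : Strat N i),
    U Rs Ra cs ca Sa pa ε (Function.update σ i τ) i ≤ U Rs Ra cs ca Sa pa ε σ i

/-- The honest strategy profile: store, audit everyone, report ✓ iff a valid proof
was received. -/
def honest (N : ℕ) : ∀ i : Fin N, Strat N i :=
  fun _ => ⟨true, fun _ => true, fun _ b => b⟩

/-- The fully dishonest strategy profile: don't store, don't audit, always report ✓. -/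
def dishonest (N : ℕ) : ∀ i : Fin N, Strat N i :=
  fun _ => ⟨false, fun _ => false, fun _ _ => true⟩


private lemma pair_le (Ra ca Sa pa ε : ℝ) (hRa : 0 < Ra) (hca : 0 < ca)
    (hε0 : 0 < ε) (hε1 : ε < 1)
    (hF : ε * ((1 - pa) * Ra - pa * Sa) < -ca) (hca' : ca < (1 - ε) * Ra)
    (sj a : Bool) (ρ : Bool → Bool) :
    pairPayoff Ra ca Sa pa ε sj a ρ ≤ (1 - ε) * Ra - ca := by
  have hF0 : (1 - pa) * Ra - pa * Sa < 0 := by nlinarith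
  cases sj <;> cases a <;> rcases hT : ρ true <;> rcases hFf : ρ false <;>
    simp [pairPayoff, b01, hT, hFf] <;> nlinarith

/-- Under the strict conditions (i)–(iii), for any coalition `J` with
`|J| < N/2`, the honest profile is `(|J|²·c_a)`-coalition resistant with respect to `J`:
for every joint deviation of the members of `J` (non-members keep playing honestly), the
coalition's total utility exceeds its honest total by at most `|J|²·c_a`. -/
theorem honest_coalition_resistant
    (N : ℕ) (hN : 3 ≤ N) (Rs Ra cs ca Sa pa ε : ℝ)
    (hRs : 0 < Rs) (hRa : 0 < Ra) (hcs : 0 < cs) (hca : 0 < ca) (hSa : 0 ≤ Sa)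
    (hpa0 : 0 < pa) (hpa1 : pa ≤ 1) (hε0 : 0 < ε) (hε1 : ε < 1)
    (h1 : ((1 - pa) / pa) * Ra + ca / (ε * pa) < Sa)
    (h2 : ca / (1 - ε) < Ra)
    (h3 : cs < Rs)
    (J : Finset (Fin N)) (hJ : (J.card : ℝ) < (N : ℝ) / 2)
    (σ : ∀ i : Fin N, Strat N i) (hσ : ∀ i ∉ J, σ i = honest N i) :
    ∑ i ∈ J, U Rs Ra cs ca Sa pa ε σ i
      ≤ ∑ i ∈ J, U Rs Ra cs ca Sa pa ε (honest N) i + (J.card : ℝ) ^ 2 * ca := by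
 -- proof
  have hε1' : (0:ℝ) < 1 - ε := by linarith
  have hca' : ca < (1 - ε) * Ra := by
    rw [div_lt_iff₀ hε1'] at h2; linarith [h2]
  have hF : ε * ((1 - pa) * Ra - pa * Sa) < -ca := by
    have e1 : ((1 - pa) / pa) * Ra * (ε * pa) = (1 - pa) * Ra * ε := by
      field_simp
    have e2 : ca / (ε * pa) * (ε * pa) = ca := by
      field_simp
    have h := mul_lt_mul_of_pos_right h1 (mul_pos hε0 hpa0)
    rw [add_mul, e1, e2] at h
    nlinarith
  -- honest pair value
  have hHpair : pairPayoff Ra ca Sa pa ε true true (fun b => b) = (1 - ε) * Ra - ca := by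
    simp [pairPayoff, b01]
  -- honest trueReports
  have hHrep : ∀ i : Fin N, trueReports (honest N) i = N - 1 := by
    intro i
    unfold trueReports
    rw [Finset.filter_true_of_mem (by intro j _; simp [report, honest])]
    rw [Finset.card_univ]
    simp [Fintype.card_subtype_compl]
  have hN3 : (3:ℝ) ≤ (N:ℝ) := by exact_mod_cast hN
  have hHind : ∀ i : Fin N,
      (if (N : ℝ) / 2 < ((trueReports (honest N) i : ℕ) : ℝ) then (1:ℝ) else 0) = 1 := by
    intro i
    rw [if_pos]
    rw [hHrep i]
    have : ((N - 1 : ℕ) : ℝ) = (N:ℝ) - 1 := by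
      have : 1 ≤ N := by omega
      push_cast [this]; ring
    rw [this]; linarith
  have key : ∀ i ∈ J, U Rs Ra cs ca Sa pa ε σ i ≤ U Rs Ra cs ca Sa pa ε (honest N) i := by
    intro i hi
    unfold U
    rw [hHind i]
    have hsum : ∑ j : {j : Fin N // j ≠ i},
        pairPayoff Ra ca Sa pa ε (σ j.1).s ((σ i).a j) ((σ i).ρ j)
        ≤ ∑ j : {j : Fin N // j ≠ i},
        pairPayoff Ra ca Sa pa ε ((honest N) j.1).s (((honest N) i).a j) (((honest N) i).ρ j) := by
      apply Finset.sum_le_sum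
      intro j _
      have : pairPayoff Ra ca Sa pa ε ((honest N) j.1).s (((honest N) i).a j)
          (((honest N) i).ρ j) = (1 - ε) * Ra - ca := by
        simpa [honest] using hHpair
      rw [this]
      exact pair_le Ra ca Sa pa ε hRa hca hε0 hε1 hF hca' _ _ _
    have hstore : Rs * (if (N : ℝ) / 2 < ((trueReports σ i : ℕ) : ℝ) then (1:ℝ) else 0)
        - cs * b01 (σ i).s ≤ Rs * 1 - cs * b01 ((honest N i).s) := by
      rcases hs : (σ i).s with _ | _
      · -- s_i = false : no reward, no cost
        have hrep : (trueReports σ i : ℝ) ≤ (J.card : ℝ) := by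
          have hle : trueReports σ i ≤ J.card := by
            unfold trueReports
            apply Finset.card_le_card_of_injOn Subtype.val
            · intro j hj
              by_contra hjJ
              simp [report, hσ j.1 hjJ, honest, hs] at hj
            · exact fun a _ b _ hab => Subtype.ext hab
          exact_mod_cast hle
        have : ¬ ((N : ℝ) / 2 < ((trueReports σ i : ℕ) : ℝ)) := by
          push_neg; exact le_of_lt (lt_of_le_of_lt hrep hJ)
        rw [if_neg this]
        simp [b01, honest]
        linarith
      · -- s_i = true
        simp only [b01, honest, if_pos]
        have : (if (N : ℝ) / 2 < ((trueReports σ i : ℕ) : ℝ) then (1:ℝ) else 0) ≤ 1 := by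
          split <;> norm_num
        nlinarith [this]
    -- combine
    have := add_le_add hstore hsum
    convert this using 1 <;> ring
  have hsum := Finset.sum_le_sum key
  have hslack : (0:ℝ) ≤ (J.card : ℝ) ^ 2 * ca := by positivity
  linarith
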